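/- Let X be a set and H a subgroup of S(X). Choose a set R of representatives of the H-orbits on X. Then the centralizer of H in S(X) is trivial if and only if: (a) for every x ∈ R, the stabilizer S_x = {h ∈ H : h(x) = x} equals its own normalizer in H, and (b) for all distinct x, y ∈ R, the subgroups S_x and S_y are not conjugate in H. -/

import Mathlib

/-!
The centralizer of `H` consists of the `H`-equivariant permutations of `X`, and these preserve
stabilizers. Conversely, if `S_a = S_b`, then `g • a ↦ g • b` is well defined, and swapping the
orbits of `a` and `b` in this way is an equivariant permutation moving `a` to `b`. So the
centralizer is trivial exactly when `x ↦ S_x` is injective. Since `S_{h • x} = h S_x h⁻¹`,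
injectivity within an orbit is condition (a) and injectivity across orbits is condition (b).
-/

open MulAction Function

namespace MulAction

variable {G α : Type*} [Group G] [MulAction G α]

theorem smul_mem_orbit_iff {g : G} {a p : α} : g • p ∈ orbit G a ↔ p ∈ orbit G a := by
  rw [← orbit_eq_iff, orbit_smul, orbit_eq_iff]

theorem smul_eq_smul_of_stabilizer_le {a b : α} (hab : stabilizer G a ≤ stabilizer G b)
    {g g' : G} (h : g • a = g' • a) : g • b = g' • b := by
  have hmem : g'⁻¹ * g ∈ stabilizer G b :=
    hab (by rw [mem_stabilizer_iff, mul_smul, h, inv_smul_smul])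
  rwa [mem_stabilizer_iff, mul_smul, inv_smul_eq_iff] at hmem

theorem stabilizer_apply_of_injective {β : Type*} [MulAction G β] {f : α → β}
    (hf : Injective f) (hsmul : ∀ (g : G) (p : α), f (g • p) = g • f p) (p : α) :
    stabilizer G (f p) = stabilizer G p := by
  ext g
  rw [mem_stabilizer_iff, mem_stabilizer_iff, ← hsmul, hf.eq_iff]

variable (G) in
open Classical in
/-- Sends `g • a ↦ g • b` and `g • b ↦ g • a` and fixes the other orbits; this is well defined
when `a` and `b` have the same stabilizer. -/
noncomputable def orbitSwap (a b p : α) : α :=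
  if hp : p ∈ orbit G a then (mem_orbit_iff.mp hp).choose • b
  else if hq : p ∈ orbit G b then (mem_orbit_iff.mp hq).choose • a
  else p

variable {a b : α}

theorem orbitSwap_smul_left (hab : stabilizer G a ≤ stabilizer G b) (g : G) :
    orbitSwap G a b (g • a) = g • b := by
  have hp : g • a ∈ orbit G a := mem_orbit _ _
  rw [orbitSwap, dif_pos hp]
  exact smul_eq_smul_of_stabilizer_le hab (mem_orbit_iff.mp hp).choose_spec

theorem orbitSwap_smul_right (hba : stabilizer G b ≤ stabilizer G a) (hb : b ∉ orbit G a)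
    (g : G) : orbitSwap G a b (g • b) = g • a := by
  have hq : g • b ∈ orbit G b := mem_orbit _ _
  rw [orbitSwap, dif_neg (smul_mem_orbit_iff.not.mpr hb), dif_pos hq]
  exact smul_eq_smul_of_stabilizer_le hba (mem_orbit_iff.mp hq).choose_spec

theorem orbitSwap_of_notMem {p : α} (ha : p ∉ orbit G a) (hb : p ∉ orbit G b) :
    orbitSwap G a b p = p := by
  rw [orbitSwap, dif_neg ha, dif_neg hb]

theorem orbitSwap_orbitSwap (hst : stabilizer G a = stabilizer G b) (p : α) :
    orbitSwap G b a (orbitSwap G a b p) = p := by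
  by_cases ha : p ∈ orbit G a
  · obtain ⟨g, rfl⟩ := ha
    rw [orbitSwap_smul_left hst.le, orbitSwap_smul_left hst.ge]
  by_cases hb : p ∈ orbit G b
  · have hba : b ∉ orbit G a := fun h => ha (orbit_eq_iff.mpr h ▸ hb)
    obtain ⟨g, rfl⟩ := hb
    rw [orbitSwap_smul_right hst.ge hba, orbitSwap_smul_right hst.le (mem_orbit_symm.not.mp hba)]
  · rw [orbitSwap_of_notMem ha hb, orbitSwap_of_notMem hb ha]

theorem orbitSwap_smul (hst : stabilizer G a = stabilizer G b) (g : G) (p : α) :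
    orbitSwap G a b (g • p) = g • orbitSwap G a b p := by
  by_cases ha : p ∈ orbit G a
  · obtain ⟨k, rfl⟩ := ha
    rw [smul_smul, orbitSwap_smul_left hst.le, orbitSwap_smul_left hst.le, smul_smul]
  by_cases hb : p ∈ orbit G b
  · have hba : b ∉ orbit G a := fun h => ha (orbit_eq_iff.mpr h ▸ hb)
    obtain ⟨k, rfl⟩ := hb
    rw [smul_smul, orbitSwap_smul_right hst.ge hba, orbitSwap_smul_right hst.ge hba, smul_smul]
  · rw [orbitSwap_of_notMem ha hb,
      orbitSwap_of_notMem (smul_mem_orbit_iff.not.mpr ha) (smul_mem_orbit_iff.not.mpr hb)]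

variable (G) in
noncomputable def orbitSwapPerm (hst : stabilizer G a = stabilizer G b) : Equiv.Perm α where
  toFun := orbitSwap G a b
  invFun := orbitSwap G b a
  left_inv := orbitSwap_orbitSwap hst
  right_inv := orbitSwap_orbitSwap hst.symm

theorem mem_centralizer_range_toPerm_iff {τ : Equiv.Perm α} :
    τ ∈ Subgroup.centralizer (Set.range (toPerm : G → Equiv.Perm α)) ↔
      ∀ (g : G) (p : α), τ (g • p) = g • τ p := by
  simp only [Subgroup.mem_centralizer_iff, Set.forall_mem_range, Equiv.ext_iff,
    Equiv.Perm.mul_apply, toPerm_apply]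
  exact forall_congr' fun g => forall_congr' fun p => eq_comm

theorem centralizer_range_toPerm_eq_bot_iff :
    Subgroup.centralizer (Set.range (toPerm : G → Equiv.Perm α)) = ⊥ ↔
      Injective (stabilizer G : α → Subgroup G) := by
  constructor
  · intro hbot a b hst
    have hmem : orbitSwapPerm G hst ∈ Subgroup.centralizer (Set.range toPerm) :=
      mem_centralizer_range_toPerm_iff.mpr (orbitSwap_smul hst)
    rw [hbot, Subgroup.mem_bot] at hmem
    have hab : orbitSwap G a b a = b := by simpa using orbitSwap_smul_left hst.le (1 : G)
    exact (Equiv.ext_iff.mp hmem a).symm.trans hab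
  · intro hinj
    rw [Subgroup.eq_bot_iff_forall]
    intro τ hτ
    ext p
    exact hinj <|
      stabilizer_apply_of_injective τ.injective (mem_centralizer_range_toPerm_iff.mp hτ) p

theorem stabilizer_injective_iff {R : Set α} (hR1 : ∀ x : α, ∃ r ∈ R, x ∈ orbit G r)
    (hR2 : ∀ r ∈ R, ∀ s ∈ R, s ∈ orbit G r → r = s) :
    Injective (stabilizer G : α → Subgroup G) ↔
      (∀ x ∈ R, Subgroup.normalizer (stabilizer G x : Set G) = stabilizer G x) ∧
        ∀ x ∈ R, ∀ y ∈ R, x ≠ y →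
          ¬ ∃ g : G, (stabilizer G x).map (MulAut.conj g).toMonoidHom = stabilizer G y := by
  constructor
  · intro hinj
    refine ⟨fun x _ => le_antisymm (fun n hn => ?_) Subgroup.le_normalizer, ?_⟩
    · have hst : stabilizer G (n • x) = stabilizer G x := by
        rw [stabilizer_smul_eq_stabilizer_map_conj]
        exact Subgroup.mem_normalizer_iff_map_conj_eq.mp hn
      exact hinj hst
    · rintro x hx y hy hxy ⟨g, hg⟩
      have hgx : g • x = y := hinj (by rw [stabilizer_smul_eq_stabilizer_map_conj, hg])
      exact hxy (hR2 x hx y hy (hgx ▸ mem_orbit x g))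
  · rintro ⟨hnorm, hconj⟩
    have hrep : ∀ r ∈ R, ∀ y, stabilizer G r = stabilizer G y → r = y := by
      intro r hr y hry
      obtain ⟨s, hs, g, rfl⟩ := hR1 y
      rw [stabilizer_smul_eq_stabilizer_map_conj] at hry
      obtain rfl : s = r := by_contra fun hsr => hconj s hs r hr hsr ⟨g, hry.symm⟩
      have hg : g ∈ stabilizer G s :=
        hnorm s hs ▸ Subgroup.mem_normalizer_iff_map_conj_eq.mpr hry.symm
      exact (mem_stabilizer_iff.mp hg).symm
    intro x y hxy
    obtain ⟨r, hr, g, rfl⟩ := hR1 x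
    have hry : stabilizer G r = stabilizer G (g⁻¹ • y) := by
      rw [stabilizer_smul_eq_stabilizer_map_conj g⁻¹ y, ← hxy,
        ← stabilizer_smul_eq_stabilizer_map_conj, inv_smul_smul]
    show g • r = y
    rw [hrep r hr _ hry, smul_inv_smul]

end MulAction

theorem Subgroup.range_toPerm {α : Type*} (H : Subgroup (Equiv.Perm α)) :
    Set.range (toPerm : H → Equiv.Perm α) = H := by
  ext σ
  exact ⟨by rintro ⟨h, rfl⟩; exact h.2, fun hσ => ⟨⟨σ, hσ⟩, rfl⟩⟩

theorem stmt17 (X : Type*) (H : Subgroup (Equiv.Perm X)) (R : Set X)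
    (hR1 : ∀ x : X, ∃ r ∈ R, x ∈ MulAction.orbit H r)
    (hR2 : ∀ r ∈ R, ∀ s ∈ R, s ∈ MulAction.orbit H r → r = s) :
    Subgroup.centralizer (H : Set (Equiv.Perm X)) = ⊥ ↔
      ((∀ x ∈ R, Subgroup.normalizer (MulAction.stabilizer H x : Set H) = MulAction.stabilizer H x) ∧
       (∀ x ∈ R, ∀ y ∈ R, x ≠ y →
          ¬ ∃ h : H, (MulAction.stabilizer H x).map (MulAut.conj h).toMonoidHom =
              MulAction.stabilizer H y)) := by
  rw [← H.range_toPerm, centralizer_range_toPerm_eq_bot_iff]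
  exact stabilizer_injective_iff hR1 hR2
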